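/- Let R > 0 and let u, v be points of the open unit disk in ℂ with d_D(0,u) ≤ R and d_D(0,v) ≤ R. Sample (t, θ) from (0, R] × [0, 2π) according to the probability density cosh(t)/(2π·sinh(R)). Then the probability that u and v lie on the same side of the geodesic with polar coordinates (t, θ) equals 1 − d_D(u,v)/(π·sinh(R)). -/

import Mathlib

/-!
Fubini, integrating first over `t`. For a fixed direction `θ` the geodesics `(t, θ)` are the
perpendiculars to the diameter through `e^{iθ}`, and `x` lies on the inner side of `(t, θ)` iff `t`
is less than the position `s_x(θ)` of the foot of the perpendicular from `x` to that diameter.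
Hence the `cosh t dt`-measure of the `t` separating `u` and `v` is `|sinh s_u⁺ - sinh s_v⁺|`, and
the directions `θ` and `θ + π` together contribute `|sinh s_u - sinh s_v|`.

Now `sinh s_x(θ)` is the `θ`-derivative of the signed distance `δ_x(θ)` from `x` to the diameter.
The difference `δ_u - δ_v` is `π`-antiperiodic, vanishes once per half turn, and its critical values
are `± d(u, v)` (at a critical point the diameter is perpendicular to the geodesic through `u`
and `v`). So it is monotone between its extrema and its total variation over a half turn is
`2 d(u, v)`. The separating geodesics thus have measure `2 d(u, v)` out of `2π sinh R`.
-/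

open Real MeasureTheory
open scoped Classical

/-- The inverse hyperbolic cosine. -/
noncomputable def arcosh (x : ℝ) : ℝ := Real.log (x + Real.sqrt (x ^ 2 - 1))

/-- The hyperbolic distance between two points of the Poincaré disk. -/
noncomputable def poincareDist (u v : ℂ) : ℝ :=
  _root_.arcosh (1 + 2 * ‖u - v‖ ^ 2 /
    ((1 - ‖u‖ ^ 2) * (1 - ‖v‖ ^ 2)))

/-- A point `x` of the disk lies on the inner side of the geodesic with polar
coordinates `(t, θ)`, i.e. the Euclidean circle with center `coth t · e^{iθ}` and
radius `1 / sinh t`. -/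
def innerSide (x : ℂ) (t θ : ℝ) : Prop :=
  ‖x - (Real.cosh t / Real.sinh t) * Complex.exp (θ * Complex.I)‖ <
    1 / Real.sinh t

open Set Filter Function
open Complex (normSq)

theorem HasDerivAt.exists_mem_Ioo_gt_of_pos {f : ℝ → ℝ} {f' x b : ℝ} (hf : HasDerivAt f f' x)
    (hf' : 0 < f') (hxb : x < b) : ∃ y ∈ Ioo x b, f x < f y := by
  have hslope := (hasDerivAt_iff_tendsto_slope.1 hf).eventually (eventually_gt_nhds hf')
  obtain ⟨y, hy, hyb⟩ := ((hslope.filter_mono (nhdsGT_le_nhdsNE x)).and (Ioo_mem_nhdsGT hxb)).exists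
  exact ⟨y, hyb, (slope_pos_iff hyb.1).1 hy⟩

theorem HasDerivAt.exists_mem_Ioo_lt_of_pos {f : ℝ → ℝ} {f' x a : ℝ} (hf : HasDerivAt f f' x)
    (hf' : 0 < f') (hax : a < x) : ∃ y ∈ Ioo a x, f y < f x := by
  have hslope := (hasDerivAt_iff_tendsto_slope.1 hf).eventually (eventually_gt_nhds hf')
  obtain ⟨y, hy, hya⟩ := ((hslope.filter_mono (nhdsLT_le_nhdsNE x)).and (Ioo_mem_nhdsLT hax)).exists
  exact ⟨y, hya, (slope_pos_iff_gt hya.2).1 hy⟩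

/-- An increase at some point would force an interior minimum `-d` followed by an interior maximum
`d`, hence two zeros. -/
theorem nonpos_of_hasDerivAt_of_unique_zero {Q q : ℝ → ℝ} {a b d : ℝ} (hd : 0 < d)
    (hQ : ∀ x ∈ Icc a b, HasDerivAt Q (q x) x) (hQa : Q a = d) (hQb : Q b = -d)
    (hbound : ∀ x ∈ Icc a b, |Q x| ≤ d) (hcrit : ∀ x ∈ Ioo a b, q x = 0 → |Q x| = d)
    (hzero : ∀ x ∈ Ioo a b, ∀ y ∈ Ioo a b, Q x = 0 → Q y = 0 → x = y) :
    ∀ x ∈ Ioo a b, q x ≤ 0 := by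
  intro σ hσ
  by_contra! hpos
  have hQc : ContinuousOn Q (Icc a b) := fun x hx => (hQ x hx).continuousAt.continuousWithinAt
  have hσI : σ ∈ Icc a b := Ioo_subset_Icc_self hσ
  have hσd := abs_le.1 (hbound σ hσI)
  have critical_of_isExtrOn {c s t : ℝ} (hst : Ioo s t ⊆ Ioo a b) (hc : c ∈ Ioo s t)
      (hext : IsExtrOn Q (Icc s t) c) : |Q c| = d :=
    hcrit c (hst hc) (hext.isLocalExtr (Icc_mem_nhds hc.1 hc.2) |>.hasDerivAt_eq_zero
      (hQ c (Ioo_subset_Icc_self (hst hc))))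
  obtain ⟨y, hy, hQy⟩ := (hQ σ hσI).exists_mem_Ioo_gt_of_pos hpos hσ.2
  obtain ⟨c, hc, hcmax⟩ := isCompact_Icc.exists_isMaxOn (nonempty_Icc.2 hσ.2.le)
    (hQc.mono (Icc_subset_Icc_left hσ.1.le))
  have hQσc : Q σ < Q c := hQy.trans_le (hcmax ⟨hy.1.le, hy.2.le⟩)
  have hc' : c ∈ Ioo σ b :=
    ⟨hc.1.lt_of_ne (by rintro rfl; exact hQσc.false),
      hc.2.lt_of_ne (by rintro rfl; linarith)⟩
  have hQcd : Q c = d := by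
    have := critical_of_isExtrOn (Ioo_subset_Ioo_left hσ.1.le) hc' (Or.inr hcmax)
    rcases abs_eq hd.le |>.1 this with h | h <;> linarith
  obtain ⟨y', hy', hQy'⟩ := (hQ σ hσI).exists_mem_Ioo_lt_of_pos hpos hσ.1
  obtain ⟨m, hm, hmmin⟩ := isCompact_Icc.exists_isMinOn (nonempty_Icc.2 hσ.1.le)
    (hQc.mono (Icc_subset_Icc_right hσ.2.le))
  have hQmσ : Q m < Q σ := (hmmin ⟨hy'.1.le, hy'.2.le⟩).trans_lt hQy'
  have hm' : m ∈ Ioo a σ :=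
    ⟨hm.1.lt_of_ne (by rintro rfl; linarith),
      hm.2.lt_of_ne (by rintro rfl; exact hQmσ.false)⟩
  have hQmd : Q m = -d := by
    have := critical_of_isExtrOn (Ioo_subset_Ioo_right hσ.2.le) hm' (Or.inl hmmin)
    rcases abs_eq hd.le |>.1 this with h | h <;> linarith
  obtain ⟨z₁, hz₁, hQz₁⟩ := intermediate_value_Ioo' hm'.1.le
    (hQc.mono (Icc_subset_Icc_right (hm'.2.trans hσ.2).le))
    (show (0 : ℝ) ∈ Ioo (Q m) (Q a) by rw [hQa, hQmd]; constructor <;> linarith)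
  obtain ⟨z₂, hz₂, hQz₂⟩ := intermediate_value_Ioo (hm'.2.trans hc'.1).le
    (hQc.mono (Icc_subset_Icc hm'.1.le hc'.2.le))
    (show (0 : ℝ) ∈ Ioo (Q m) (Q c) by rw [hQcd, hQmd]; constructor <;> linarith)
  have := hzero z₁ ⟨hz₁.1, hz₁.2.trans (hm'.2.trans hσ.2)⟩ z₂
    ⟨hm'.1.trans hz₂.1, hz₂.2.trans hc'.2⟩ hQz₁ hQz₂
  linarith [hz₁.2, hz₂.1]

theorem Function.Periodic.exists_isMaxOn_univ {f : ℝ → ℝ} {T : ℝ} (hf : Periodic f T)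
    (hT : T ≠ 0) (hc : Continuous f) : ∃ c, IsMaxOn f univ c := by
  obtain ⟨c, -, hmax⟩ :=
    (isCompact_uIcc (a := 0) (b := 0 + T)).exists_isMaxOn nonempty_uIcc hc.continuousOn
  refine ⟨c, fun x _ => show f x ≤ f c from ?_⟩
  obtain ⟨y, hy, hyx⟩ : f x ∈ f '' uIcc 0 (0 + T) := by
    rw [hf.image_uIcc hT 0]; exact mem_range_self x
  exact hyx ▸ (hmax hy : f y ≤ f c)

/-- Starting the half period at a global maximum `c`, `Q` runs monotonically from `Q c = d` down to
`Q (c + T) = -d`. -/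
theorem integral_abs_deriv_of_antiperiodic {Q q : ℝ → ℝ} {T d : ℝ} (hT : 0 < T) (hd : 0 < d)
    (hQ : ∀ x, HasDerivAt Q (q x) x) (hq : Continuous q) (hanti : Antiperiodic Q T)
    (hcrit : ∀ x, q x = 0 → |Q x| = d)
    (hzero : ∀ x y, Q x = 0 → Q y = 0 → x < y → T ≤ y - x) :
    ∫ x in (0 : ℝ)..T, |q x| = 2 * d := by
  have hQc : Continuous Q := continuous_iff_continuousAt.2 fun x => (hQ x).continuousAt
  have hq_anti : Antiperiodic q T := fun x => by
    have h := (hQ (x + T)).comp_add_const x T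
    rw [show (fun y => Q (y + T)) = fun y => -Q y from funext hanti] at h
    exact h.unique (hQ x).neg
  obtain ⟨c, hmax⟩ := (hanti.periodic_two_mul).exists_isMaxOn_univ (by positivity) hQc
  have hqc : q c = 0 := (hmax.isLocalMax univ_mem).hasDerivAt_eq_zero (hQ c)
  have hQc_d : Q c = d := by
    have : Q (c + T) ≤ Q c := hmax (mem_univ _)
    rw [hanti] at this
    rw [← hcrit c hqc, abs_of_nonneg (by linarith)]
  have hbound : ∀ x, |Q x| ≤ d := fun x => by
    have h₁ : Q x ≤ Q c := hmax (mem_univ x)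
    have h₂ : Q (x + T) ≤ Q c := hmax (mem_univ _)
    rw [hanti] at h₂
    exact abs_le.2 ⟨by linarith, by linarith⟩
  have hmono : ∀ x ∈ Ioo c (c + T), q x ≤ 0 :=
    nonpos_of_hasDerivAt_of_unique_zero hd (fun x _ => hQ x) hQc_d (by rw [hanti, hQc_d])
      (fun x _ => hbound x) (fun x _ => hcrit x) fun x hx y hy hQx hQy => by
        by_contra hne
        rcases lt_or_gt_of_ne hne with h | h
        · linarith [hzero x y hQx hQy h, hx.1, hy.2]
        · linarith [hzero y x hQy hQx h, hy.1, hx.2]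
  have habs : ∀ x ∈ uIcc c (c + T), |q x| = -q x := by
    intro x hx
    rw [uIcc_of_le (by linarith)] at hx
    rcases eq_or_lt_of_le hx.1 with rfl | hcx
    · simp [hqc]
    rcases eq_or_lt_of_le hx.2 with rfl | hxT
    · simp [hq_anti c, hqc]
    exact abs_of_nonpos (hmono x ⟨hcx, hxT⟩)
  have hper : Periodic (fun x => |q x|) T := fun x => by simp [hq_anti x]
  rw [← zero_add T, hper.intervalIntegral_add_eq 0 c, intervalIntegral.integral_congr habs,
    intervalIntegral.integral_neg,
    intervalIntegral.integral_eq_sub_of_hasDerivAt (fun x _ => hQ x) (hq.intervalIntegrable _ _),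
    hanti, hQc_d]
  ring

theorem abs_posPart_sub_add_abs_negPart_sub (a b : ℝ) : |a⁺ - b⁺| + |a⁻ - b⁻| = |a - b| := by
  rcases le_total 0 a with ha | ha <;> rcases le_total 0 b with hb | hb <;>
    simp only [posPart_eq_self.2, negPart_eq_zero.2, posPart_eq_zero.2, negPart_eq_neg.2, ha,
      hb] <;>
    grind [abs_of_nonneg, abs_of_nonpos]

theorem integral_abs_posPart_sub_of_antiperiodic {f g : ℝ → ℝ} {T : ℝ} (hf : Continuous f)
    (hg : Continuous g) (hfT : Antiperiodic f T) (hgT : Antiperiodic g T) :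
    ∫ x in (0 : ℝ)..2 * T, |(f x)⁺ - (g x)⁺| = ∫ x in (0 : ℝ)..T, |f x - g x| := by
  have hF : Continuous fun x => |(f x)⁺ - (g x)⁺| := by
    simp only [posPart_def]; fun_prop
  have hF' : Continuous fun x => |(f (x + T))⁺ - (g (x + T))⁺| := hF.comp (continuous_add_const T)
  have hshift : ∫ x in T..2 * T, |(f x)⁺ - (g x)⁺| =
      ∫ x in (0 : ℝ)..T, |(f (x + T))⁺ - (g (x + T))⁺| := by
    rw [intervalIntegral.integral_comp_add_right (fun x => |(f x)⁺ - (g x)⁺|), zero_add, two_mul]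
  rw [← intervalIntegral.integral_add_adjacent_intervals (b := T) (hF.intervalIntegrable _ _)
    (hF.intervalIntegrable _ _), hshift, ← intervalIntegral.integral_add
      (hF.intervalIntegrable _ _) (hF'.intervalIntegrable _ _)]
  congr 1 with x
  rw [hfT, hgT, posPart_neg, posPart_neg, abs_posPart_sub_add_abs_negPart_sub]

theorem integral_Ioc_indicator_cosh {a b R : ℝ} (ha : 0 ≤ a) (hb : 0 ≤ b) (haR : a ≤ R)
    (hbR : b ≤ R) :
    ∫ t in Ioc 0 R, {t | ¬(t < a ↔ t < b)}.indicator cosh t = |sinh a - sinh b| := by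
  have hset : {t : ℝ | ¬(t < a ↔ t < b)} = Ico (min a b) (max a b) := by
    ext t
    simp only [mem_ofPred_eq, mem_Ico, min_le_iff, lt_max_iff]
    grind
  have hsub : Ico (min a b) (max a b) ⊆ Icc 0 R :=
    Ico_subset_Icc_self.trans (Icc_subset_Icc (le_min ha hb) (max_le haR hbR))
  rw [hset, setIntegral_indicator measurableSet_Ico,
    setIntegral_congr_set ((Ioc_ae_eq_Icc (μ := volume) (a := (0 : ℝ)) (b := R)).inter
      (ae_eq_refl (Ico (min a b) (max a b)))), inter_eq_right.2 hsub,
    integral_Ico_eq_integral_Ioc, ← intervalIntegral.integral_of_le min_le_max,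
    intervalIntegral.integral_eq_sub_of_hasDerivAt (fun t _ => hasDerivAt_sinh t)
      (continuous_cosh.intervalIntegrable _ _),
    sinh_strictMono.monotone.map_max, sinh_strictMono.monotone.map_min, max_sub_min_eq_abs']

theorem mul_sinh_lt_iff {p a t : ℝ} (hp : 0 < p) (ha : 4 * a ^ 2 < p ^ 2) (ht : 0 < t) :
    p * sinh t < 2 * cosh t * a ↔ sinh t < 2 * a / √(p ^ 2 - 4 * a ^ 2) := by
  have hs := sinh_pos_iff.2 ht
  have hsqrt := sqrt_pos.2 (sub_pos.2 ha)
  rw [lt_div_iff₀ hsqrt]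
  rcases le_or_gt a 0 with ha₀ | ha₀
  · constructor <;> intro h <;> nlinarith [cosh_pos t]
  · rw [← pow_lt_pow_iff_left₀ (by positivity) (by positivity) two_ne_zero,
      ← pow_lt_pow_iff_left₀ (by positivity) (by positivity : 0 ≤ 2 * a) two_ne_zero]
    simp only [mul_pow]
    rw [sq_sqrt (sub_pos.2 ha).le, cosh_sq']
    constructor <;> intro h <;> nlinarith

theorem normSq_lt_one_of_norm_lt_one {x : ℂ} (hx : ‖x‖ < 1) : normSq x < 1 := by
  rw [← Complex.sq_norm]; nlinarith [norm_nonneg x]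

theorem poincareDist_eq_arcosh (u v : ℂ) : poincareDist u v =
    Real.arcosh (1 + 2 * ‖u - v‖ ^ 2 / ((1 - ‖u‖ ^ 2) * (1 - ‖v‖ ^ 2))) := rfl

theorem poincareDist_self (u : ℂ) : poincareDist u u = 0 := by
  simp [poincareDist_eq_arcosh, Real.arcosh_zero]

theorem poincareDist_pos {u v : ℂ} (hu : ‖u‖ < 1) (hv : ‖v‖ < 1) (huv : u ≠ v) :
    0 < poincareDist u v := by
  have hu' : 0 < 1 - ‖u‖ ^ 2 := by nlinarith [norm_nonneg u]
  have hv' : 0 < 1 - ‖v‖ ^ 2 := by nlinarith [norm_nonneg v]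
  have : 0 < ‖u - v‖ := norm_pos_iff.2 (sub_ne_zero.2 huv)
  exact Real.arcosh_pos (lt_add_of_pos_right _ (by positivity))

theorem sinh_poincareDist_zero {x : ℂ} (hx : ‖x‖ < 1) :
    sinh (poincareDist 0 x) = 2 * ‖x‖ / (1 - ‖x‖ ^ 2) := by
  have hx' : 0 < 1 - ‖x‖ ^ 2 := by nlinarith [norm_nonneg x]
  rw [poincareDist_eq_arcosh, Real.sinh_arcosh (by simp; positivity), zero_sub, norm_neg,
    norm_zero]
  rw [show (1 + 2 * ‖x‖ ^ 2 / ((1 - 0 ^ 2) * (1 - ‖x‖ ^ 2))) ^ 2 - 1 =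
      (2 * ‖x‖ / (1 - ‖x‖ ^ 2)) ^ 2 by field_simp; ring]
  exact sqrt_sq (by positivity)

/-- The coordinates of `x` in the orthonormal frame `(e^{iθ}, i e^{iθ})`. -/
noncomputable def coordAlong (x : ℂ) (θ : ℝ) : ℝ := x.re * cos θ + x.im * sin θ

noncomputable def coordAcross (x : ℂ) (θ : ℝ) : ℝ := x.im * cos θ - x.re * sin θ

theorem coordAlong_mul_add_coordAcross_mul (u v : ℂ) (θ : ℝ) :
    coordAlong u θ * coordAlong v θ + coordAcross u θ * coordAcross v θ =
      u.re * v.re + u.im * v.im := by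
  simp only [coordAlong, coordAcross]
  linear_combination (u.re * v.re + u.im * v.im) * sin_sq_add_cos_sq θ

theorem coordAlong_sq_add_coordAcross_sq (x : ℂ) (θ : ℝ) :
    coordAlong x θ ^ 2 + coordAcross x θ ^ 2 = normSq x := by
  rw [Complex.normSq_apply, ← coordAlong_mul_add_coordAcross_mul]; ring

theorem antiperiodic_coordAlong (x : ℂ) : Antiperiodic (coordAlong x) π := fun θ => by
  simp only [coordAlong, cos_add_pi, sin_add_pi]; ring

theorem antiperiodic_coordAcross (x : ℂ) : Antiperiodic (coordAcross x) π := fun θ => by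
  simp only [coordAcross, cos_add_pi, sin_add_pi]; ring

theorem hasDerivAt_coordAcross (x : ℂ) (θ : ℝ) :
    HasDerivAt (coordAcross x) (-coordAlong x θ) θ := by
  have := ((hasDerivAt_cos θ).const_mul x.im).sub ((hasDerivAt_sin θ).const_mul x.re)
  exact this.congr_deriv (by simp only [coordAlong]; ring)

/-- Zeros of `θ ↦ coordAcross w θ` are the directions of the line `ℝ w`, hence `π` apart. -/
theorem pi_le_sub_of_coordAcross_eq_zero {w : ℂ} (hw : w ≠ 0) {z₁ z₂ : ℝ}
    (h₁ : coordAcross w z₁ = 0) (h₂ : coordAcross w z₂ = 0) (hz : z₁ < z₂) : π ≤ z₂ - z₁ := by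
  by_contra! hlt
  have hsin : sin (z₂ - z₁) ≠ 0 := (sin_pos_of_pos_of_lt_pi (by linarith) hlt).ne'
  apply hw
  unfold coordAcross at h₁ h₂
  apply Complex.ext
  · apply (mul_eq_zero.1 _).resolve_right hsin
    rw [sin_sub]; linear_combination cos z₂ * h₁ - cos z₁ * h₂
  · apply (mul_eq_zero.1 _).resolve_right hsin
    rw [sin_sub]; linear_combination sin z₂ * h₁ - sin z₁ * h₂

noncomputable def footDenom (x : ℂ) (θ : ℝ) : ℝ := (1 - normSq x) ^ 2 + 4 * coordAcross x θ ^ 2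

theorem footDenom_eq (x : ℂ) (θ : ℝ) :
    footDenom x θ = (1 + normSq x) ^ 2 - 4 * coordAlong x θ ^ 2 := by
  rw [footDenom, ← coordAlong_sq_add_coordAcross_sq]; ring

theorem footDenom_pos {x : ℂ} (hx : ‖x‖ < 1) (θ : ℝ) : 0 < footDenom x θ := by
  have := sub_pos.2 (normSq_lt_one_of_norm_lt_one hx)
  unfold footDenom; positivity

/-- `distToDiameter x θ` is the signed hyperbolic distance from `x` to the diameter through
`e^{iθ}`, and `sinhFoot x θ` is `sinh` of the signed hyperbolic position, along that diameter,
of the foot of the perpendicular from `x`. The geodesic `(t, θ)` is the perpendicular to the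
diameter at position `t`. -/
noncomputable def distToDiameter (x : ℂ) (θ : ℝ) : ℝ :=
  arsinh (-2 * coordAcross x θ / (1 - normSq x))

noncomputable def sinhFoot (x : ℂ) (θ : ℝ) : ℝ := 2 * coordAlong x θ / √(footDenom x θ)

theorem cosh_distToDiameter {x : ℂ} (hx : ‖x‖ < 1) (θ : ℝ) :
    cosh (distToDiameter x θ) = √(footDenom x θ) / (1 - normSq x) := by
  have hx' := sub_pos.2 (normSq_lt_one_of_norm_lt_one hx)
  have hD := footDenom_pos hx θ
  rw [distToDiameter, cosh_arsinh,
    ← sqrt_sq (by positivity : 0 ≤ √(footDenom x θ) / (1 - normSq x))]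
  congr 1
  rw [div_pow (√(footDenom x θ)), sq_sqrt hD.le, footDenom]
  field_simp
  ring

theorem hasDerivAt_distToDiameter {x : ℂ} (hx : ‖x‖ < 1) (θ : ℝ) :
    HasDerivAt (distToDiameter x) (sinhFoot x θ) θ := by
  have hx' := sub_pos.2 (normSq_lt_one_of_norm_lt_one hx)
  have hD := sqrt_pos.2 (footDenom_pos hx θ)
  have h := (hasDerivAt_arsinh _).comp θ
    (((hasDerivAt_coordAcross x θ).const_mul (-2)).div_const (1 - normSq x))
  rw [← cosh_arsinh, ← distToDiameter, cosh_distToDiameter hx] at h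
  exact h.congr_deriv (by rw [sinhFoot]; field_simp)

theorem antiperiodic_distToDiameter (x : ℂ) : Antiperiodic (distToDiameter x) π := fun θ => by
  simp only [distToDiameter, antiperiodic_coordAcross x θ, mul_neg, neg_div, arsinh_neg]

theorem antiperiodic_sinhFoot (x : ℂ) : Antiperiodic (sinhFoot x) π := fun θ => by
  simp only [sinhFoot, footDenom, antiperiodic_coordAlong x θ, antiperiodic_coordAcross x θ,
    neg_sq, mul_neg, neg_div]

theorem continuous_sinhFoot {x : ℂ} (hx : ‖x‖ < 1) : Continuous (sinhFoot x) := by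
  unfold sinhFoot coordAlong
  exact Continuous.div (by fun_prop) (by unfold footDenom coordAcross; fun_prop)
    fun θ => (sqrt_pos.2 (footDenom_pos hx θ)).ne'

theorem innerSide_iff_mul_sinh_lt (x : ℂ) {t : ℝ} (ht : 0 < t) (θ : ℝ) :
    innerSide x t θ ↔ (1 + normSq x) * sinh t < 2 * cosh t * coordAlong x θ := by
  have hs := sinh_pos_iff.2 ht
  have hnorm : ‖x - (cosh t / sinh t : ℝ) * Complex.exp (θ * Complex.I)‖ ^ 2 - (1 / sinh t) ^ 2 =
      ((1 + normSq x) * sinh t - 2 * cosh t * coordAlong x θ) / sinh t := by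
    rw [Complex.sq_norm, Complex.normSq_apply]
    simp only [Complex.sub_re, Complex.sub_im, Complex.re_ofReal_mul, Complex.im_ofReal_mul,
      Complex.exp_ofReal_mul_I_re, Complex.exp_ofReal_mul_I_im, coordAlong, Complex.normSq_apply]
    field_simp
    linear_combination (cosh t ^ 2) * sin_sq_add_cos_sq θ + cosh_sq' t
  rw [innerSide, ← Complex.ofReal_div, ← pow_lt_pow_iff_left₀ (norm_nonneg _) (by positivity)
    two_ne_zero, ← sub_neg, hnorm, div_neg_iff, sub_neg]
  simp [hs, hs.not_gt]

theorem innerSide_iff_sinh_lt_sinhFoot {x : ℂ} (hx : ‖x‖ < 1) {t : ℝ} (ht : 0 < t) (θ : ℝ) :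
    innerSide x t θ ↔ sinh t < sinhFoot x θ := by
  have hD := footDenom_pos hx θ
  rw [footDenom_eq] at hD
  rw [innerSide_iff_mul_sinh_lt x ht, sinhFoot, footDenom_eq,
    mul_sinh_lt_iff (by linarith [Complex.normSq_nonneg x]) (by linarith) ht]

theorem sinhFoot_le_sinh_poincareDist_zero {x : ℂ} (hx : ‖x‖ < 1) (θ : ℝ) :
    sinhFoot x θ ≤ sinh (poincareDist 0 x) := by
  have hx' : 0 < 1 - ‖x‖ ^ 2 := by nlinarith [norm_nonneg x]
  have hD := footDenom_pos hx θ
  have hα : coordAlong x θ ^ 2 ≤ ‖x‖ ^ 2 := by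
    rw [Complex.sq_norm, ← coordAlong_sq_add_coordAcross_sq]; nlinarith
  rw [sinh_poincareDist_zero hx, sinhFoot, div_le_div_iff₀ (sqrt_pos.2 hD) hx']
  have hsq : (coordAlong x θ * (1 - ‖x‖ ^ 2)) ^ 2 ≤ (‖x‖ * √(footDenom x θ)) ^ 2 := by
    rw [mul_pow, mul_pow, sq_sqrt hD.le, footDenom, ← Complex.sq_norm]
    nlinarith [mul_le_mul_of_nonneg_right hα (sq_nonneg (1 - ‖x‖ ^ 2)),
      sq_nonneg (‖x‖ * coordAcross x θ)]
  nlinarith [(abs_le_of_sq_le_sq' hsq (by positivity)).2]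

theorem innerSide_iff_lt_arsinh_posPart {x : ℂ} (hx : ‖x‖ < 1) {t : ℝ} (ht : 0 < t) (θ : ℝ) :
    innerSide x t θ ↔ t < arsinh (sinhFoot x θ)⁺ := by
  rw [innerSide_iff_sinh_lt_sinhFoot hx ht, ← sinh_lt_sinh (x := t), sinh_arsinh, posPart_def,
    lt_sup_iff, or_iff_left (sinh_pos_iff.2 ht).not_gt]

theorem arsinh_posPart_sinhFoot_mem_Icc {x : ℂ} (hx : ‖x‖ < 1) {R : ℝ}
    (hxR : poincareDist 0 x ≤ R) (θ : ℝ) : arsinh (sinhFoot x θ)⁺ ∈ Icc 0 R := by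
  have hsinh : 0 ≤ sinh (poincareDist 0 x) := by
    rw [sinh_poincareDist_zero hx]
    exact div_nonneg (by positivity) (by nlinarith [norm_nonneg x])
  refine ⟨arsinh_nonneg_iff.2 (posPart_nonneg _), ?_⟩
  rw [← arsinh_sinh R, arsinh_le_arsinh, posPart_def]
  exact sup_le ((sinhFoot_le_sinh_poincareDist_zero hx θ).trans (sinh_le_sinh.2 hxR))
    (hsinh.trans (sinh_le_sinh.2 hxR))

section

variable {u v : ℂ} {θ : ℝ}

theorem coordAlong_mul_eq_of_sinhFoot_eq (hu : ‖u‖ < 1) (hv : ‖v‖ < 1)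
    (h : sinhFoot u θ = sinhFoot v θ) :
    coordAlong u θ * (1 + normSq v) = coordAlong v θ * (1 + normSq u) := by
  have hDu := footDenom_pos hu θ
  have hDv := footDenom_pos hv θ
  have hcross : coordAlong u θ * √(footDenom v θ) = coordAlong v θ * √(footDenom u θ) := by
    rw [sinhFoot, sinhFoot, div_eq_div_iff (sqrt_pos.2 hDu).ne' (sqrt_pos.2 hDv).ne'] at h
    linarith
  have hsign : 0 ≤ coordAlong u θ * coordAlong v θ := by
    have : coordAlong u θ * coordAlong v θ * √(footDenom v θ) =
        coordAlong v θ ^ 2 * √(footDenom u θ) := by linear_combination coordAlong v θ * hcross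
    nlinarith [sqrt_pos.2 hDv, sqrt_nonneg (footDenom u θ), sq_nonneg (coordAlong v θ)]
  have hsq : (coordAlong u θ * (1 + normSq v)) ^ 2 = (coordAlong v θ * (1 + normSq u)) ^ 2 := by
    have := congrArg (· ^ 2) hcross
    rw [mul_pow, mul_pow, sq_sqrt hDu.le, sq_sqrt hDv.le, footDenom_eq, footDenom_eq] at this
    linear_combination this
  rcases sq_eq_sq_iff_eq_or_eq_neg.1 hsq with h' | h'
  · exact h'
  · have hprod : 0 ≤ coordAlong u θ * (1 + normSq v) * (coordAlong v θ * (1 + normSq u)) := by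
      rw [show coordAlong u θ * (1 + normSq v) * (coordAlong v θ * (1 + normSq u)) =
        coordAlong u θ * coordAlong v θ * ((1 + normSq u) * (1 + normSq v)) by ring]
      exact mul_nonneg hsign (mul_nonneg (by linarith [Complex.normSq_nonneg u])
        (by linarith [Complex.normSq_nonneg v]))
    have hzero : coordAlong v θ * (1 + normSq u) = 0 := by
      rw [h'] at hprod; nlinarith [sq_nonneg (coordAlong v θ * (1 + normSq u))]
    rw [h', hzero, neg_zero]

theorem sqrt_footDenom_mul_sqrt_footDenom (hu : ‖u‖ < 1) (hv : ‖v‖ < 1)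
    (h : coordAlong u θ * (1 + normSq v) = coordAlong v θ * (1 + normSq u)) :
    √(footDenom u θ) * √(footDenom v θ) =
      (1 + normSq u) * (1 + normSq v) - 4 * coordAlong u θ * coordAlong v θ := by
  have hDu := footDenom_pos hu θ
  have hDv := footDenom_pos hv θ
  rw [footDenom_eq] at hDu hDv
  have hprod := mul_le_mul (sub_pos.1 hDu).le (sub_pos.1 hDv).le (by positivity)
    (sq_nonneg (1 + normSq u))
  have hbound := abs_le_of_sq_le_sq' (a := 4 * coordAlong u θ * coordAlong v θ)
    (b := (1 + normSq u) * (1 + normSq v)) (by linear_combination hprod)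
    (mul_nonneg (by linarith [Complex.normSq_nonneg u]) (by linarith [Complex.normSq_nonneg v]))
  rw [← sqrt_mul (footDenom_pos hu θ).le, ← sqrt_sq (sub_nonneg.2 hbound.2), footDenom_eq,
    footDenom_eq]
  congr 1
  linear_combination (4 * coordAlong v θ * (1 + normSq u) - 4 * coordAlong u θ * (1 + normSq v)) * h

theorem cosh_distToDiameter_sub_of_sinhFoot_eq (hu : ‖u‖ < 1) (hv : ‖v‖ < 1)
    (h : sinhFoot u θ = sinhFoot v θ) :
    cosh (distToDiameter u θ - distToDiameter v θ) =
      1 + 2 * ‖u - v‖ ^ 2 / ((1 - ‖u‖ ^ 2) * (1 - ‖v‖ ^ 2)) := by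
  have hu' := sub_pos.2 (normSq_lt_one_of_norm_lt_one hu)
  have hv' := sub_pos.2 (normSq_lt_one_of_norm_lt_one hv)
  have hdot := coordAlong_mul_add_coordAcross_mul u v θ
  rw [cosh_sub, cosh_distToDiameter hu, cosh_distToDiameter hv, div_mul_div_comm,
    sqrt_footDenom_mul_sqrt_footDenom hu hv (coordAlong_mul_eq_of_sinhFoot_eq hu hv h),
    distToDiameter, distToDiameter, sinh_arsinh, sinh_arsinh, Complex.sq_norm, Complex.sq_norm,
    Complex.sq_norm, Complex.normSq_apply (u - v)]
  simp only [Complex.sub_re, Complex.sub_im]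
  field_simp
  rw [Complex.normSq_apply, Complex.normSq_apply]
  linear_combination (-4) * hdot

theorem abs_distToDiameter_sub_of_sinhFoot_eq (hu : ‖u‖ < 1) (hv : ‖v‖ < 1)
    (h : sinhFoot u θ = sinhFoot v θ) :
    |distToDiameter u θ - distToDiameter v θ| = poincareDist u v := by
  rw [poincareDist_eq_arcosh, ← cosh_distToDiameter_sub_of_sinhFoot_eq hu hv h, ← cosh_abs,
    Real.arcosh_cosh (abs_nonneg _)]

theorem distToDiameter_eq_iff (hu : ‖u‖ < 1) (hv : ‖v‖ < 1) (θ : ℝ) :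
    distToDiameter u θ = distToDiameter v θ ↔
      coordAcross (u * (1 - normSq v : ℝ) - v * (1 - normSq u : ℝ)) θ = 0 := by
  have hu' := sub_pos.2 (normSq_lt_one_of_norm_lt_one hu)
  have hv' := sub_pos.2 (normSq_lt_one_of_norm_lt_one hv)
  rw [distToDiameter, distToDiameter, arsinh_inj, div_eq_div_iff hu'.ne' hv'.ne']
  simp only [coordAcross, Complex.sub_re, Complex.sub_im, Complex.mul_re, Complex.mul_im,
    Complex.ofReal_re, Complex.ofReal_im, mul_zero, sub_zero]
  constructor <;> intro h <;> linarith

theorem sub_mul_one_sub_normSq_ne_zero (hu : ‖u‖ < 1) (hv : ‖v‖ < 1) (huv : u ≠ v) :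
    u * ((1 - normSq v : ℝ) : ℂ) - v * ((1 - normSq u : ℝ) : ℂ) ≠ 0 := by
  have hu₁ := normSq_lt_one_of_norm_lt_one hu
  have hv₁ := normSq_lt_one_of_norm_lt_one hv
  intro h
  have h' := sub_eq_zero.1 h
  have hnorm := congrArg normSq h'
  simp only [Complex.normSq_mul, Complex.normSq_ofReal] at hnorm
  have heq : normSq u = normSq v := by
    have : (normSq u - normSq v) * (1 - normSq u * normSq v) = 0 := by linear_combination hnorm
    refine sub_eq_zero.1 ((mul_eq_zero.1 this).resolve_right ?_)
    nlinarith [Complex.normSq_nonneg u, Complex.normSq_nonneg v]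
  rw [heq] at h'
  exact huv (mul_right_cancel₀ (Complex.ofReal_ne_zero.2 (by linarith)) h')

theorem pi_le_sub_of_distToDiameter_eq (hu : ‖u‖ < 1) (hv : ‖v‖ < 1) (huv : u ≠ v)
    {z₁ z₂ : ℝ} (h₁ : distToDiameter u z₁ = distToDiameter v z₁)
    (h₂ : distToDiameter u z₂ = distToDiameter v z₂) (hz : z₁ < z₂) : π ≤ z₂ - z₁ :=
  pi_le_sub_of_coordAcross_eq_zero (sub_mul_one_sub_normSq_ne_zero hu hv huv)
    ((distToDiameter_eq_iff hu hv z₁).1 h₁) ((distToDiameter_eq_iff hu hv z₂).1 h₂) hz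

theorem integral_abs_sinhFoot_sub (hu : ‖u‖ < 1) (hv : ‖v‖ < 1) :
    ∫ θ in (0 : ℝ)..π, |sinhFoot u θ - sinhFoot v θ| = 2 * poincareDist u v := by
  rcases eq_or_ne u v with rfl | huv
  · simp [poincareDist_self]
  exact integral_abs_deriv_of_antiperiodic pi_pos (poincareDist_pos hu hv huv)
    (fun θ => (hasDerivAt_distToDiameter hu θ).sub (hasDerivAt_distToDiameter hv θ))
    ((continuous_sinhFoot hu).sub (continuous_sinhFoot hv))
    (fun θ => by
      rw [Pi.sub_apply, Pi.sub_apply, antiperiodic_distToDiameter u θ,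
        antiperiodic_distToDiameter v θ, neg_sub_neg, neg_sub])
    (fun θ hθ => abs_distToDiameter_sub_of_sinhFoot_eq hu hv (sub_eq_zero.1 hθ))
    (fun z₁ z₂ h₁ h₂ => pi_le_sub_of_distToDiameter_eq hu hv huv (sub_eq_zero.1 h₁)
      (sub_eq_zero.1 h₂))

end

theorem measurable_innerSide (x : ℂ) : Measurable fun p : ℝ × ℝ => innerSide x p.1 p.2 :=
  measurableSet_setOfPred.1 <| by
    unfold innerSide; exact measurableSet_lt (by fun_prop) (by fun_prop)

theorem measurableSet_not_innerSide_iff (u v : ℂ) :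
    MeasurableSet {p : ℝ × ℝ | ¬(innerSide u p.1 p.2 ↔ innerSide v p.1 p.2)} :=
  ((measurable_innerSide u).iff (measurable_innerSide v)).not.setOf

theorem integrableOn_cosh_fst (R T : ℝ) :
    IntegrableOn (fun p : ℝ × ℝ => cosh p.1) (Ioc 0 R ×ˢ Ico 0 T) :=
  ((continuous_cosh.comp continuous_fst).continuousOn.integrableOn_compact
    (isCompact_Icc.prod isCompact_Icc)).mono_set (prod_mono Ioc_subset_Icc_self Ico_subset_Icc_self)

theorem setIntegral_cosh_fst {R T : ℝ} (hR : 0 ≤ R) (hT : 0 ≤ T) :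
    ∫ p in Ioc 0 R ×ˢ Ico 0 T, cosh p.1 = sinh R * T := by
  have := setIntegral_prod_mul (μ := volume) (ν := volume) cosh (fun _ => (1 : ℝ))
    (Ioc 0 R) (Ico 0 T)
  simp only [mul_one, ← Measure.volume_eq_prod] at this
  rw [this, ← intervalIntegral.integral_of_le hR, intervalIntegral.integral_eq_sub_of_hasDerivAt
      (fun t _ => hasDerivAt_sinh t) (continuous_cosh.intervalIntegrable _ _)]
  simp [hT]

theorem integral_Ioc_indicator_not_innerSide_iff {u v : ℂ} (hu : ‖u‖ < 1) (hv : ‖v‖ < 1) {R : ℝ}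
    (huR : poincareDist 0 u ≤ R) (hvR : poincareDist 0 v ≤ R) (θ : ℝ) :
    ∫ t in Ioc 0 R, {t | ¬(innerSide u t θ ↔ innerSide v t θ)}.indicator cosh t =
      |(sinhFoot u θ)⁺ - (sinhFoot v θ)⁺| := by
  obtain ⟨hu₀, huR'⟩ := arsinh_posPart_sinhFoot_mem_Icc hu huR θ
  obtain ⟨hv₀, hvR'⟩ := arsinh_posPart_sinhFoot_mem_Icc hv hvR θ
  rw [← sinh_arsinh (sinhFoot u θ)⁺, ← sinh_arsinh (sinhFoot v θ)⁺,
    ← integral_Ioc_indicator_cosh hu₀ hv₀ huR' hvR']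
  refine setIntegral_congr_fun measurableSet_Ioc fun t ht => ?_
  have h := innerSide_iff_lt_arsinh_posPart hu ht.1 θ
  have h' := innerSide_iff_lt_arsinh_posPart hv ht.1 θ
  simp only [indicator_apply, mem_ofPred_eq, h, h']

theorem setIntegral_indicator_not_innerSide_iff {u v : ℂ} (hu : ‖u‖ < 1) (hv : ‖v‖ < 1) {R : ℝ}
    (huR : poincareDist 0 u ≤ R) (hvR : poincareDist 0 v ≤ R) :
    ∫ p in Ioc 0 R ×ˢ Ico 0 (2 * π),
        {p : ℝ × ℝ | ¬(innerSide u p.1 p.2 ↔ innerSide v p.1 p.2)}.indicator (fun p => cosh p.1) p =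
      2 * poincareDist u v := by
  have hint := (integrableOn_cosh_fst R (2 * π)).indicator (measurableSet_not_innerSide_iff u v)
  rw [IntegrableOn, Measure.volume_eq_prod, ← Measure.prod_restrict] at hint
  rw [Measure.volume_eq_prod, ← Measure.prod_restrict, integral_prod_symm _ hint]
  refine (setIntegral_congr_fun measurableSet_Ico
    (g := fun θ => |(sinhFoot u θ)⁺ - (sinhFoot v θ)⁺|) fun θ _ => ?_).trans ?_
  · exact integral_Ioc_indicator_not_innerSide_iff hu hv huR hvR θ
  rw [integral_Ico_eq_integral_Ioc, ← intervalIntegral.integral_of_le (by positivity),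
    integral_abs_posPart_sub_of_antiperiodic (continuous_sinhFoot hu) (continuous_sinhFoot hv)
      (antiperiodic_sinhFoot u) (antiperiodic_sinhFoot v), integral_abs_sinhFoot_sub hu hv]

/-- Sampling a geodesic `(t, θ)` from `(0, R] × [0, 2π)` according to the
probability density `cosh t / (2π sinh R)`, the probability that `u` and `v` lie
on the same side of the geodesic equals `1 - d_D(u, v) / (π sinh R)`. -/
theorem collision_probability_random_geodesic (R : ℝ) (hR : 0 < R) (u v : ℂ)
    (hu : ‖u‖ < 1) (hv : ‖v‖ < 1)
    (hu' : poincareDist 0 u ≤ R) (hv' : poincareDist 0 v ≤ R) :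
    ∫ p in (Set.Ioc (0 : ℝ) R) ×ˢ (Set.Ico (0 : ℝ) (2 * π)),
        (if (innerSide u p.1 p.2 ↔ innerSide v p.1 p.2) then
          Real.cosh p.1 / (2 * π * Real.sinh R) else 0)
      = 1 - poincareDist u v / (π * Real.sinh R) := by
  set separating := {p : ℝ × ℝ | ¬(innerSide u p.1 p.2 ↔ innerSide v p.1 p.2)}
  have hint := integrableOn_cosh_fst R (2 * π)
  calc _ = ∫ p in Ioc 0 R ×ˢ Ico 0 (2 * π),
        (cosh p.1 - separating.indicator (fun p => cosh p.1) p) / (2 * π * sinh R) := by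
        congr 1 with p
        by_cases h : innerSide u p.1 p.2 ↔ innerSide v p.1 p.2 <;> simp [separating, h]
    _ = (sinh R * (2 * π) - 2 * poincareDist u v) / (2 * π * sinh R) := by
        rw [integral_div, integral_sub hint (hint.indicator (measurableSet_not_innerSide_iff u v)),
          setIntegral_cosh_fst hR.le (by positivity),
          setIntegral_indicator_not_innerSide_iff hu hv hu' hv']
    _ = 1 - poincareDist u v / (π * sinh R) := by
        have := sinh_pos_iff.2 hR
        field_simp
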